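/- arXiv:2102.08808 — 2 statements merged into one kernel-verified Lean document; each statement's English description precedes it below -/
import Mathlib

section
/- Let n ≥ 2 be a natural number and λ > 0 a real number. If r is a natural number with r ≥ log₂ n + log₂ (ln n) + log₂(λ+1), then n·(1 − 1/n)^{2^r} ≤ 1/n^λ. -/
/-!
The hypothesis on `r` says exactly that `2 ^ r ≥ n log n (λ + 1)`. Since `1 - 1/n ≤ exp (-1/n)`,
the left side is at most `n exp (-2 ^ r / n) ≤ n exp (-(λ + 1) log n) = n ^ (-λ)`.
-/

open Real

lemma one_sub_inv_pow_le_exp {x : ℝ} (hx : 1 ≤ x) (m : ℕ) :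
    (1 - 1 / x) ^ m ≤ exp (-(m / x)) := by
  have hbase : 0 ≤ 1 - 1 / x := sub_nonneg.mpr ((div_le_one (by linarith)).mpr hx)
  calc (1 - 1 / x) ^ m ≤ exp (-(1 / x)) ^ m :=
        pow_le_pow_left₀ hbase (by linarith [add_one_le_exp (-(1 / x))]) m
    _ = exp (-(m / x)) := by rw [← exp_nat_mul]; ring_nf

lemma mul_one_sub_inv_pow_le_inv_rpow {x l : ℝ} (hx : 1 ≤ x) {m : ℕ}
    (hm : x * log x * (l + 1) ≤ m) :
    x * (1 - 1 / x) ^ m ≤ 1 / x ^ l := by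
  have hx0 : 0 < x := by linarith
  have hexp : (1 - 1 / x) ^ m ≤ x ^ (-(l + 1)) := by
    calc (1 - 1 / x) ^ m ≤ exp (-(m / x)) := one_sub_inv_pow_le_exp hx m
      _ ≤ exp (log x * -(l + 1)) := by
          rw [exp_le_exp, mul_neg, neg_le_neg_iff, le_div_iff₀ hx0]; linarith
      _ = x ^ (-(l + 1)) := (rpow_def_of_pos hx0 _).symm
  calc x * (1 - 1 / x) ^ m ≤ x * x ^ (-(l + 1)) := by gcongr
    _ = 1 / x ^ l := by
        rw [neg_add, rpow_add hx0, rpow_neg hx0.le, rpow_neg_one]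
        field_simp

theorem stmt_2 (n : ℕ) (hn : 2 ≤ n) (l : ℝ) (hl : 0 < l) (r : ℕ)
    (hr : Real.logb 2 n + Real.logb 2 (Real.log n) + Real.logb 2 (l + 1) ≤ (r : ℝ)) :
    (n : ℝ) * (1 - 1 / (n : ℝ)) ^ (2 ^ r) ≤ 1 / (n : ℝ) ^ l := by
  have hn2 : (2 : ℝ) ≤ n := by exact_mod_cast hn
  have hlog : 0 < log n := log_pos (by linarith)
  have hprod : 0 < (n : ℝ) * log n * (l + 1) := by positivity
  refine mul_one_sub_inv_pow_le_inv_rpow (by linarith) ?_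
  rw [← logb_mul (by positivity) hlog.ne', ← logb_mul (by positivity) (by positivity),
    logb_le_iff_le_rpow (by norm_num) hprod, rpow_natCast] at hr
  exact_mod_cast hr
end

section
/- Let G be a graph with minimum degree d, maximum degree Δ, average degree α = 2m/n, and edge expansion β. If β + d > α and d + Δ ≤ 2α, then for every S ⊆ V with |S| ≤ n/2: ξ(E(S)) ≥ (1+δ)·|S|/n and ξ(E(S) \ ∂S) ≤ (1−δ)·|S|/n, where δ = (β+d)/α − 1 > 0 and ξ is the uniform distribution on edges. -/
/-! Counting incidences between `S` and the edges gives
`∑ v ∈ S, deg v = 2 |E(S) \ ∂S| + |∂S|`. Bounding the degree sum by `d |S|` from below and by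
`Δ |S|` from above, and using `|∂S| ≥ β |S|`, yields `2 |E(S)| ≥ (β + d) |S|` and
`2 |E(S) \ ∂S| ≤ (Δ - β) |S| ≤ (2α - β - d) |S|`; dividing by `2m = α n` gives both bounds. -/

/-- Edges with at least one endpoint in `S`. -/
def incEdges {V : Type*} [Fintype V] [DecidableEq V] (G : SimpleGraph V) [DecidableRel G.Adj]
    (S : Finset V) : Finset (Sym2 V) :=
  G.edgeFinset.filter (fun e => ∃ u v, e = s(u, v) ∧ (u ∈ S ∨ v ∈ S))

/-- Edges with exactly one endpoint in `S` (the edge boundary of `S`). -/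
def bdryEdges {V : Type*} [Fintype V] [DecidableEq V] (G : SimpleGraph V) [DecidableRel G.Adj]
    (S : Finset V) : Finset (Sym2 V) :=
  G.edgeFinset.filter (fun e => ∃ u v, e = s(u, v) ∧ u ∈ S ∧ v ∉ S)

open Finset

section EdgeCounts

variable {V : Type*} [Fintype V] [DecidableEq V] (G : SimpleGraph V) [DecidableRel G.Adj]
  (S : Finset V)

lemma Sym2.exists_mk_eq_and_iff {α : Type*} (a b : α) (P : α → α → Prop) :
    (∃ u v, s(a, b) = s(u, v) ∧ P u v) ↔ P a b ∨ P b a := by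
  constructor
  · rintro ⟨u, v, h, hP⟩
    rcases Sym2.eq_iff.mp h with ⟨rfl, rfl⟩ | ⟨rfl, rfl⟩
    exacts [Or.inl hP, Or.inr hP]
  · rintro (h | h)
    exacts [⟨a, b, rfl, h⟩, ⟨b, a, Sym2.eq_swap, h⟩]

lemma mk_mem_incEdges {a b : V} :
    s(a, b) ∈ incEdges G S ↔ G.Adj a b ∧ (a ∈ S ∨ b ∈ S) := by
  simp only [incEdges, mem_filter, SimpleGraph.mem_edgeFinset, SimpleGraph.mem_edgeSet,
    Sym2.exists_mk_eq_and_iff]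
  tauto

lemma mk_mem_bdryEdges {a b : V} :
    s(a, b) ∈ bdryEdges G S ↔ G.Adj a b ∧ (a ∈ S ∧ b ∉ S ∨ b ∈ S ∧ a ∉ S) := by
  simp only [bdryEdges, mem_filter, SimpleGraph.mem_edgeFinset, SimpleGraph.mem_edgeSet,
    Sym2.exists_mk_eq_and_iff]

lemma mk_mem_incEdges_sdiff_bdryEdges {a b : V} :
    s(a, b) ∈ incEdges G S \ bdryEdges G S ↔ G.Adj a b ∧ a ∈ S ∧ b ∈ S := by
  rw [mem_sdiff, mk_mem_incEdges, mk_mem_bdryEdges]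
  tauto

lemma bdryEdges_subset_incEdges : bdryEdges G S ⊆ incEdges G S := by
  intro e
  induction e with
  | _ a b => rw [mk_mem_bdryEdges, mk_mem_incEdges]; tauto

lemma incEdges_subset_edgeFinset : incEdges G S ⊆ G.edgeFinset := filter_subset _ _

lemma card_filter_mem_of_mem_edgeFinset {e : Sym2 V} (he : e ∈ G.edgeFinset) :
    #{v ∈ S | v ∈ e} = 2 * (if e ∈ incEdges G S \ bdryEdges G S then 1 else 0)
      + if e ∈ bdryEdges G S then 1 else 0 := by
  induction e with
  | _ a b =>
    have hab : G.Adj a b := G.mem_edgeFinset.mp he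
    simp only [mk_mem_incEdges_sdiff_bdryEdges, mk_mem_bdryEdges]
    by_cases ha : a ∈ S <;> by_cases hb : b ∈ S <;> simp [ha, hb, hab, hab.ne, filter_or, filter_eq']

lemma sum_degree_eq_two_mul_card_sdiff_add_card_bdryEdges :
    ∑ v ∈ S, G.degree v = 2 * #(incEdges G S \ bdryEdges G S) + #(bdryEdges G S) := by
  have hinner : incEdges G S \ bdryEdges G S ⊆ G.edgeFinset :=
    sdiff_subset.trans (incEdges_subset_edgeFinset G S)
  have hbdry := (bdryEdges_subset_incEdges G S).trans (incEdges_subset_edgeFinset G S)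
  calc ∑ v ∈ S, G.degree v = ∑ e ∈ G.edgeFinset, #{v ∈ S | v ∈ e} := by
        simp_rw [← G.card_incidenceFinset_eq_degree, G.incidenceFinset_eq_filter]
        exact sum_card_bipartiteAbove_eq_sum_card_bipartiteBelow _
    _ = _ := by
        rw [sum_congr rfl fun e he => card_filter_mem_of_mem_edgeFinset G S he, sum_add_distrib, ← mul_sum,
          sum_boole, sum_boole, filter_mem_eq_inter, filter_mem_eq_inter, inter_eq_right.mpr hinner,
          inter_eq_right.mpr hbdry, Nat.cast_id, Nat.cast_id]

lemma add_mul_card_le_two_mul_card_incEdges {β d : ℝ} (hd : ∀ v ∈ S, d ≤ G.degree v)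
    (hβ : β * #S ≤ #(bdryEdges G S)) :
    (β + d) * #S ≤ 2 * #(incEdges G S) := by
  have hdeg : #S • d ≤ ∑ v ∈ S, (G.degree v : ℝ) := card_nsmul_le_sum S _ d hd
  have hsum : ∑ v ∈ S, (G.degree v : ℝ) =
      2 * #(incEdges G S \ bdryEdges G S) + #(bdryEdges G S) := by
    exact_mod_cast sum_degree_eq_two_mul_card_sdiff_add_card_bdryEdges G S
  have hcard : (#(incEdges G S \ bdryEdges G S) : ℝ) + #(bdryEdges G S) = #(incEdges G S) := by
    exact_mod_cast card_sdiff_add_card_eq_card (bdryEdges_subset_incEdges G S)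
  rw [nsmul_eq_mul] at hdeg
  linarith

lemma two_mul_card_sdiff_le {β Δ : ℝ} (hΔ : ∀ v ∈ S, G.degree v ≤ Δ)
    (hβ : β * #S ≤ #(bdryEdges G S)) :
    2 * #(incEdges G S \ bdryEdges G S) ≤ (Δ - β) * #S := by
  have hdeg : ∑ v ∈ S, (G.degree v : ℝ) ≤ #S • Δ := sum_le_card_nsmul S _ Δ hΔ
  have hsum : ∑ v ∈ S, (G.degree v : ℝ) =
      2 * #(incEdges G S \ bdryEdges G S) + #(bdryEdges G S) := by
    exact_mod_cast sum_degree_eq_two_mul_card_sdiff_add_card_bdryEdges G S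
  rw [nsmul_eq_mul] at hdeg
  linarith

end EdgeCounts

lemma SimpleGraph.card_pos_of_one_le_card_edgeFinset {V : Type*} [Fintype V] {G : SimpleGraph V}
    [Fintype G.edgeSet] (hm : 1 ≤ #G.edgeFinset) : 0 < Fintype.card V := by
  have h := G.card_edgeFinset_le_card_choose_two
  by_contra! hV
  simp_all [Nat.le_zero.mp hV]

theorem stmt_13_general {V : Type*} [Fintype V] [DecidableEq V] (G : SimpleGraph V) [DecidableRel G.Adj]
    (hm : 1 ≤ G.edgeFinset.card)
    (d Δ α β δ : ℝ)
    (hd : ∀ v, d ≤ (G.degree v : ℝ)) (hΔ : ∀ v, (G.degree v : ℝ) ≤ Δ)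
    (hα : α = 2 * (G.edgeFinset.card : ℝ) / Fintype.card V)
    (hβ : ∀ S : Finset V, 2 * S.card ≤ Fintype.card V →
      β * S.card ≤ ((bdryEdges G S).card : ℝ))
    (h1 : α < β + d) (h2 : d + Δ ≤ 2 * α)
    (hδ : δ = (β + d) / α - 1) :
    0 < δ ∧
      ∀ S : Finset V, 2 * S.card ≤ Fintype.card V →
        (1 + δ) * S.card / Fintype.card V ≤ ((incEdges G S).card : ℝ) / G.edgeFinset.card ∧
        (((incEdges G S) \ (bdryEdges G S)).card : ℝ) / G.edgeFinset.card ≤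
          (1 - δ) * S.card / Fintype.card V := by
  have hn : (0 : ℝ) < Fintype.card V := by exact_mod_cast G.card_pos_of_one_le_card_edgeFinset hm
  have hm_pos : (0 : ℝ) < #G.edgeFinset := by exact_mod_cast hm
  have hα_pos : 0 < α := hα ▸ by positivity
  have hscale (x : ℝ) (S : Finset V) :
      x / α * #S / Fintype.card V = x * #S / (2 * #G.edgeFinset) := by
    rw [hα]; field_simp
  refine ⟨by rw [hδ, sub_pos, one_lt_div hα_pos]; exact h1, fun S hS => ⟨?_, ?_⟩⟩
  · calc (1 + δ) * #S / Fintype.card V = (β + d) * #S / (2 * #G.edgeFinset) := by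
          rw [← hscale, hδ, add_sub_cancel]
      _ ≤ 2 * #(incEdges G S) / (2 * #G.edgeFinset) := by
          gcongr ?_ / _
          exact add_mul_card_le_two_mul_card_incEdges G S (fun v _ => hd v) (hβ S hS)
      _ = #(incEdges G S) / #G.edgeFinset := mul_div_mul_left _ _ two_ne_zero
  · calc (#(incEdges G S \ bdryEdges G S) : ℝ) / #G.edgeFinset
        = 2 * #(incEdges G S \ bdryEdges G S) / (2 * #G.edgeFinset) :=
          (mul_div_mul_left _ _ two_ne_zero).symm
      _ ≤ (2 * α - (β + d)) * #S / (2 * #G.edgeFinset) := by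
          gcongr ?_ / _
          calc _ ≤ (Δ - β) * #S := two_mul_card_sdiff_le G S (fun v _ => hΔ v) (hβ S hS)
            _ ≤ (2 * α - (β + d)) * #S := by gcongr ?_ * _; linarith
      _ = (1 - δ) * #S / Fintype.card V := by
          rw [← hscale, hδ]; field_simp; ring

theorem stmt_13 {V : Type*} [Fintype V] [DecidableEq V] (G : SimpleGraph V) [DecidableRel G.Adj]
    (hn : 0 < Fintype.card V) (hm : 1 ≤ G.edgeFinset.card)
    (d Δ α β δ : ℝ)
    (hd : ∀ v, d ≤ (G.degree v : ℝ)) (hΔ : ∀ v, (G.degree v : ℝ) ≤ Δ)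
    (hα : α = 2 * (G.edgeFinset.card : ℝ) / Fintype.card V)
    (hβ : ∀ S : Finset V, 2 * S.card ≤ Fintype.card V →
      β * S.card ≤ ((bdryEdges G S).card : ℝ))
    (h1 : α < β + d) (h2 : d + Δ ≤ 2 * α)
    (hδ : δ = (β + d) / α - 1) :
    0 < δ ∧
      ∀ S : Finset V, 2 * S.card ≤ Fintype.card V →
        (1 + δ) * S.card / Fintype.card V ≤ ((incEdges G S).card : ℝ) / G.edgeFinset.card ∧
        (((incEdges G S) \ (bdryEdges G S)).card : ℝ) / G.edgeFinset.card ≤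
          (1 - δ) * S.card / Fintype.card V :=
  stmt_13_general G hm d Δ α β δ hd hΔ hα hβ h1 h2 hδ
end
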